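/- Let s ∈ (0,1), a = 1-2s, and ζ ∈ ℝ. Define v_ζ(τ,η) = (1 + (ζ/4)ρ) U(τ,η) where ρ = √(τ²+η²) and U(τ,η) = (ρ^{1/2} cos(θ/2))^{2s}. Then in the upper half-plane {η > 0}, L_a v_ζ := ∂²_τ v_ζ + ∂²_η v_ζ + (a/η) ∂_η v_ζ = (ζ/(1-a)) U_τ. -/

import Mathlib

/-!
For `η ≠ 0` put `w = (ρ + τ)/2 > 0`. The half-angle formula `ρ cos²(θ/2) = (ρ + τ)/2` gives
`U = w^s`, hence `U_τ = sU/ρ`, `U_η = sUη/(ρ(ρ + τ))`, and differentiating once more, `L_a U = 0`.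
By the product rule, `L_a((1 + cρ)U) = (1 + cρ) L_a U + c U L_a ρ + 2c ∇ρ·∇U`, where
`L_a ρ = (1 + a)/ρ` and `∇ρ·∇U = (τU_τ + ηU_η)/ρ = sU/ρ` since `U` is homogeneous of degree `s`.
For `c = ζ/4` and `1 + a = 2 - 2s` this equals `(ζ/2) U/ρ = (ζ/(2s)) U_τ = (ζ/(1 - a)) U_τ`.
-/

open Real Set

/-- The function `U(τ,η) = (ρ^{1/2} cos(θ/2))^{2s}` in Cartesian coordinates, where
`ρ = √(τ²+η²)` and `θ = arg(τ + iη)` (for `η > 0` one has `θ ∈ (0,π)`). -/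
noncomputable def Ucart (s τ η : ℝ) : ℝ :=
  (Real.sqrt (Real.sqrt (τ ^ 2 + η ^ 2)) *
    Real.cos (Complex.arg ⟨τ, η⟩ / 2)) ^ (2 * s)

/-- The function `v_ζ(τ,η) = (1 + (ζ/4) ρ) U(τ,η)` with `ρ = √(τ²+η²)`. -/
noncomputable def vzeta (s ζ τ η : ℝ) : ℝ :=
  (1 + (ζ / 4) * Real.sqrt (τ ^ 2 + η ^ 2)) * Ucart s τ η

open Filter Topology

noncomputable def rho (τ η : ℝ) : ℝ := √(τ ^ 2 + η ^ 2)

lemma vzeta_eq_mul (s ζ τ η : ℝ) : vzeta s ζ τ η = (1 + ζ / 4 * rho τ η) * Ucart s τ η := rfl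

lemma rho_comm (τ η : ℝ) : rho τ η = rho η τ := by
  rw [rho, rho, add_comm]

lemma rho_sq (τ η : ℝ) : rho τ η ^ 2 = τ ^ 2 + η ^ 2 :=
  Real.sq_sqrt (by positivity)

lemma rho_nonneg (τ η : ℝ) : 0 ≤ rho τ η :=
  Real.sqrt_nonneg _

lemma rho_pos (τ : ℝ) {η : ℝ} (hη : η ≠ 0) : 0 < rho τ η :=
  Real.sqrt_pos.2 (by positivity)

lemma abs_le_rho (τ η : ℝ) : |τ| ≤ rho τ η :=
  Real.abs_le_sqrt (by nlinarith [sq_nonneg η])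

lemma abs_lt_rho (τ : ℝ) {η : ℝ} (hη : η ≠ 0) : |τ| < rho τ η :=
  (Real.lt_sqrt (abs_nonneg τ)).2 (by rw [sq_abs]; exact lt_add_of_pos_right _ (by positivity))

lemma rho_add_pos (τ : ℝ) {η : ℝ} (hη : η ≠ 0) : 0 < rho τ η + τ := by
  linarith [neg_abs_le τ, abs_lt_rho τ hη]

lemma norm_mk_eq_rho (τ η : ℝ) : ‖(⟨τ, η⟩ : ℂ)‖ = rho τ η := by
  rw [Complex.norm_def, Complex.normSq_mk, rho]
  ring_nf

lemma Ucart_eq_rpow (s τ η : ℝ) : Ucart s τ η = ((rho τ η + τ) / 2) ^ s := by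
  have hw : 0 ≤ (rho τ η + τ) / 2 := by linarith [neg_abs_le τ, abs_le_rho τ η]
  have hhalf : √(rho τ η) * Real.cos (Complex.arg ⟨τ, η⟩ / 2) = √((rho τ η + τ) / 2) := by
    rw [Real.cos_half (Complex.neg_pi_lt_arg _).le (Complex.arg_le_pi _),
      ← Real.sqrt_mul (rho_nonneg τ η), ← norm_mk_eq_rho, mul_div_assoc', mul_one_add,
      Complex.norm_mul_cos_arg]
  show (√(rho τ η) * Real.cos (Complex.arg ⟨τ, η⟩ / 2)) ^ (2 * s) = _
  rw [hhalf, Real.rpow_mul (Real.sqrt_nonneg _), Real.rpow_two, Real.sq_sqrt hw]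

lemma hasDerivAt_rho_left {τ η : ℝ} (h : 0 < rho τ η) :
    HasDerivAt (rho · η) (τ / rho τ η) τ := by
  have h2 : HasDerivAt (fun t => t ^ 2 + η ^ 2) (2 * τ) τ := by
    simpa using (hasDerivAt_pow 2 τ).add_const (η ^ 2)
  refine (h2.sqrt (by rw [← rho_sq]; positivity)).congr_deriv ?_
  change 2 * τ / (2 * rho τ η) = τ / rho τ η
  field_simp

lemma hasDerivAt_rho_right {τ η : ℝ} (h : 0 < rho τ η) :
    HasDerivAt (rho τ ·) (η / rho τ η) η := by
  rw [rho_comm] at h ⊢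
  simpa only [rho_comm τ] using hasDerivAt_rho_left h

lemma eventually_rho_pos_left {τ η : ℝ} (h : 0 < rho τ η) : ∀ᶠ t in 𝓝 τ, 0 < rho t η :=
  continuousAt_const.eventually_lt (hasDerivAt_rho_left h).continuousAt h

lemma hasDerivAt_deriv_rho_left {τ η : ℝ} (h : 0 < rho τ η) :
    HasDerivAt (deriv (rho · η)) (η ^ 2 / rho τ η ^ 3) τ := by
  have hderiv : deriv (rho · η) =ᶠ[𝓝 τ] fun t => t / rho t η :=
    (eventually_rho_pos_left h).mono fun t ht => (hasDerivAt_rho_left ht).deriv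
  refine (((hasDerivAt_id' τ).div (hasDerivAt_rho_left h) h.ne').congr_of_eventuallyEq
    hderiv).congr_deriv ?_
  field_simp
  linear_combination rho_sq τ η

lemma hasDerivAt_Ucart_left (s : ℝ) {τ η : ℝ} (hη : η ≠ 0) :
    HasDerivAt (Ucart s · η) (s * Ucart s τ η / rho τ η) τ := by
  have hρ := rho_pos τ hη
  have hw := rho_add_pos τ hη
  simp only [Ucart_eq_rpow]
  refine ((((hasDerivAt_rho_left hρ).add (hasDerivAt_id' τ)).div_const 2).rpow_const
    (p := s) (Or.inl (by positivity))).congr_deriv ?_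
  rw [Pi.add_apply, Real.rpow_sub_one (by positivity)]
  field_simp
  ring

lemma hasDerivAt_Ucart_right (s : ℝ) {τ η : ℝ} (hη : η ≠ 0) :
    HasDerivAt (Ucart s τ ·) (s * Ucart s τ η * η / (rho τ η * (rho τ η + τ))) η := by
  have hρ := rho_pos τ hη
  have hw := rho_add_pos τ hη
  simp only [Ucart_eq_rpow]
  refine ((((hasDerivAt_rho_right hρ).add_const τ).div_const 2).rpow_const
    (p := s) (Or.inl (by positivity))).congr_deriv ?_
  rw [Real.rpow_sub_one (by positivity)]
  field_simp

lemma hasDerivAt_deriv_Ucart_left (s : ℝ) {τ η : ℝ} (hη : η ≠ 0) :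
    HasDerivAt (deriv (Ucart s · η))
      (s * Ucart s τ η * (s * rho τ η - τ) / rho τ η ^ 3) τ := by
  have hderiv : deriv (Ucart s · η) = fun t => s * Ucart s t η / rho t η :=
    funext fun t => (hasDerivAt_Ucart_left s hη).deriv
  have hρ := rho_pos τ hη
  rw [hderiv]
  refine (((hasDerivAt_Ucart_left s hη).const_mul s).div (hasDerivAt_rho_left hρ)
    hρ.ne').congr_deriv ?_
  field_simp

lemma hasDerivAt_deriv_Ucart_right (s : ℝ) {τ η : ℝ} (hη : η ≠ 0) :
    HasDerivAt (deriv (Ucart s τ ·))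
      (s * Ucart s τ η * (s * rho τ η * (rho τ η - τ) + τ ^ 2 + rho τ η * τ - rho τ η ^ 2) /
        (rho τ η ^ 3 * (rho τ η + τ))) η := by
  have hderiv : deriv (Ucart s τ ·) =ᶠ[𝓝 η]
      fun e => s * Ucart s τ e * e / (rho τ e * (rho τ e + τ)) :=
    (eventually_ne_nhds hη).mono fun e he => (hasDerivAt_Ucart_right s he).deriv
  have hρ := rho_pos τ hη
  have hw := rho_add_pos τ hη
  have hρ' := hasDerivAt_rho_right hρ
  refine (((((hasDerivAt_Ucart_right s hη).const_mul s).mul (hasDerivAt_id' η)).div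
    (hρ'.mul (hρ'.add_const τ)) (mul_pos hρ hw).ne').congr_of_eventuallyEq hderiv).congr_deriv ?_
  simp only [Pi.mul_apply]
  field_simp
  linear_combination s * Ucart s τ η * (2 * rho τ η + τ - s * rho τ η) * rho_sq τ η

noncomputable def La (a : ℝ) (F : ℝ → ℝ → ℝ) (τ η : ℝ) : ℝ :=
  deriv (deriv (F · η)) τ + deriv (deriv (F τ ·)) η + a / η * deriv (F τ ·) η

lemma La_Ucart_eq_zero (s : ℝ) {τ η : ℝ} (hη : η ≠ 0) : La (1 - 2 * s) (Ucart s) τ η = 0 := by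
  have hρ := rho_pos τ hη
  have hw := rho_add_pos τ hη
  rw [La, (hasDerivAt_deriv_Ucart_left s hη).deriv, (hasDerivAt_deriv_Ucart_right s hη).deriv,
    (hasDerivAt_Ucart_right s hη).deriv]
  field_simp
  ring

lemma deriv_deriv_mul {f g : ℝ → ℝ} {x : ℝ}
    (hf : ∀ᶠ y in 𝓝 x, DifferentiableAt ℝ f y) (hg : ∀ᶠ y in 𝓝 x, DifferentiableAt ℝ g y)
    (hf' : DifferentiableAt ℝ (deriv f) x) (hg' : DifferentiableAt ℝ (deriv g) x) :
    deriv (deriv fun y => f y * g y) x =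
      deriv (deriv f) x * g x + 2 * (deriv f x * deriv g x) + f x * deriv (deriv g) x := by
  have h : deriv (fun y => f y * g y) =ᶠ[𝓝 x] fun y => deriv f y * g y + f y * deriv g y :=
    (hf.and hg).mono fun y h => deriv_fun_mul h.1 h.2
  rw [h.deriv_eq, deriv_fun_add (hf'.fun_mul hg.self_of_nhds) (hf.self_of_nhds.fun_mul hg'),
    deriv_fun_mul hf' hg.self_of_nhds, deriv_fun_mul hf.self_of_nhds hg']
  ring

lemma deriv_deriv_one_add_mul_rho_mul_left (c : ℝ) {g : ℝ → ℝ} {τ η : ℝ} (h : 0 < rho τ η)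
    (hg : ∀ᶠ t in 𝓝 τ, DifferentiableAt ℝ g t) (hg' : DifferentiableAt ℝ (deriv g) τ) :
    deriv (deriv fun t => (1 + c * rho t η) * g t) τ =
      c * (η ^ 2 / rho τ η ^ 3) * g τ + 2 * (c * (τ / rho τ η) * deriv g τ) +
        (1 + c * rho τ η) * deriv (deriv g) τ := by
  have hf : ∀ᶠ t in 𝓝 τ, DifferentiableAt ℝ (fun t => 1 + c * rho t η) t :=
    (eventually_rho_pos_left h).mono fun t ht =>
      ((hasDerivAt_rho_left ht).differentiableAt.const_mul c).const_add 1
  have hf' : DifferentiableAt ℝ (deriv fun t => 1 + c * rho t η) τ := by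
    simp only [deriv_const_add', deriv_const_mul_field']
    exact (hasDerivAt_deriv_rho_left h).differentiableAt.const_mul c
  rw [deriv_deriv_mul hf hg hf' hg']
  simp only [deriv_const_add', deriv_const_mul_field']
  rw [(hasDerivAt_deriv_rho_left h).deriv, (hasDerivAt_rho_left h).deriv]

lemma deriv_deriv_one_add_mul_rho_mul_right (c : ℝ) {g : ℝ → ℝ} {τ η : ℝ} (h : 0 < rho τ η)
    (hg : ∀ᶠ e in 𝓝 η, DifferentiableAt ℝ g e) (hg' : DifferentiableAt ℝ (deriv g) η) :
    deriv (deriv fun e => (1 + c * rho τ e) * g e) η =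
      c * (τ ^ 2 / rho τ η ^ 3) * g η + 2 * (c * (η / rho τ η) * deriv g η) +
        (1 + c * rho τ η) * deriv (deriv g) η := by
  rw [rho_comm] at h ⊢
  simpa only [rho_comm τ] using deriv_deriv_one_add_mul_rho_mul_left c h hg hg'

/-- With `s ∈ (0,1)`, `a = 1 - 2s`, `ζ ∈ ℝ`, in the upper half-plane
`{η > 0}` one has `L_a v_ζ = ∂²_τ v_ζ + ∂²_η v_ζ + (a/η) ∂_η v_ζ = (ζ/(1-a)) U_τ`. -/
theorem stmt_5 (s a ζ : ℝ) (hs : s ∈ Set.Ioo (0:ℝ) 1) (ha : a = 1 - 2 * s)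
    (τ η : ℝ) (hη : 0 < η) :
    deriv (fun t : ℝ => deriv (fun t' : ℝ => vzeta s ζ t' η) t) τ
      + deriv (fun e : ℝ => deriv (fun e' : ℝ => vzeta s ζ τ e') e) η
      + (a / η) * deriv (fun e : ℝ => vzeta s ζ τ e) η
      = (ζ / (1 - a)) * deriv (fun t : ℝ => Ucart s t η) τ := by
  subst ha
  have hη₀ := hη.ne'
  have hρ := rho_pos τ hη₀
  have hw := rho_add_pos τ hη₀
  have hUτ : ∀ᶠ t in 𝓝 τ, DifferentiableAt ℝ (Ucart s · η) t :=
    .of_forall fun t => (hasDerivAt_Ucart_left s hη₀).differentiableAt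
  have hUη : ∀ᶠ e in 𝓝 η, DifferentiableAt ℝ (Ucart s τ ·) e :=
    (eventually_ne_nhds hη₀).mono fun e he => (hasDerivAt_Ucart_right s he).differentiableAt
  have hLU := La_Ucart_eq_zero s (τ := τ) hη₀
  rw [La, (hasDerivAt_Ucart_right s hη₀).deriv] at hLU
  simp only [vzeta_eq_mul]
  rw [deriv_deriv_one_add_mul_rho_mul_left _ hρ hUτ
      (hasDerivAt_deriv_Ucart_left s hη₀).differentiableAt,
    deriv_deriv_one_add_mul_rho_mul_right _ hρ hUη
      (hasDerivAt_deriv_Ucart_right s hη₀).differentiableAt,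
    ((((hasDerivAt_rho_right hρ).const_mul _).const_add 1).fun_mul
      (hasDerivAt_Ucart_right s hη₀)).deriv,
    (hasDerivAt_Ucart_left s hη₀).deriv, (hasDerivAt_Ucart_right s hη₀).deriv, sub_sub_cancel]
  -- the terms `(1 + ζρ/4) · L_a U` drop out
  linear_combination (norm := skip) (1 + ζ / 4 * rho τ η) * hLU
  field_simp [hs.1.ne']
  linear_combination -2 * ζ * Ucart s τ η * (rho τ η + τ + 2 * s * rho τ η) * rho_sq τ η
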